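/- Let f : [0,∞) → ℝ be three times continuously differentiable with 2·f'''(x) + f(x)·f''(x) = 0 for all x ≥ 0, f(0) = f'(0) = 0, and f'(x) → 1 as x → ∞, and set V := f' (the Blasius profile). Then V(x) > 0, V'(x) > 0 and V''(x) < 0 for all x ∈ (0,∞), and there exist constants C > 0 and δ > 0 such that |V(x) − 1| ≤ C·e^{−δx}, |V'(x)| ≤ C·e^{−δx} and |V''(x)| ≤ C·e^{−δx} for all x ≥ 0 (i.e., V → 1, V' → 0 and V'' → 0 exponentially as x → ∞). -/

import Mathlib

/-!
With `F x = ∫₀ˣ f`, the equation says that `f'' · exp (F / 2)` is constant, so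
`f'' = f''(0) · exp (-F / 2)` never changes sign. If `f''(0) ≤ 0`, then `f'` would decrease from
`f'(0) = 0`, contradicting `f' → 1`; hence `f'' > 0`, `f'` increases to `1`, `f > 0` and
`f''' = -f f'' / 2 < 0`. As `f' ≥ 1/2` eventually, `F` grows linearly, which gives
`f'' ≤ C e^{-x/4}`. Integrating this from `x` to `∞` bounds `1 - f'`, and `f ≤ x` gives
`|f'''| = f f'' / 2 ≤ C x e^{-x/4} / 2`, which is `O(e^{-x/8})`.
-/

open MeasureTheory Set Filter

/-- Iterated derivative on `[0, ∞)` of a real-valued function. -/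
noncomputable def Dr (f : ℝ → ℝ) (n : ℕ) : ℝ → ℝ := iteratedDerivWithin n f (Set.Ici 0)

/-- `f` is a solution of the Blasius problem: `f` is three times continuously
differentiable, `2f''' + ff'' = 0` on `[0, ∞)`, `f(0) = f'(0) = 0`, and
`f'(x) → 1` as `x → ∞`. -/
def IsBlasiusSolution (f : ℝ → ℝ) : Prop :=
  ContDiffOn ℝ 3 f (Set.Ici 0) ∧
  (∀ x : ℝ, 0 ≤ x → 2 * Dr f 3 x + f x * Dr f 2 x = 0) ∧
  f 0 = 0 ∧ Dr f 1 0 = 0 ∧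
  Filter.Tendsto (Dr f 1) Filter.atTop (nhds 1)

open Real Topology

section Ici

variable {g g' : ℝ → ℝ} {a : ℝ}

theorem eq_mul_exp_integral_of_hasDerivWithinAt {p : ℝ → ℝ} {x : ℝ} (hp : Continuous p)
    (hg : ∀ y, a ≤ y → HasDerivWithinAt g (p y * g y) (Ici a) y) (hx : a ≤ x) :
    g x = g a * exp (∫ t in a..x, p t) := by
  set P : ℝ → ℝ := fun y => ∫ t in a..y, p t
  have hP : ∀ y, HasDerivAt P (p y) y := fun y => (hp.integral_hasStrictDerivAt a y).hasDerivAt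
  have hconst : ∀ y, a ≤ y → HasDerivWithinAt (fun y => g y * exp (-P y)) 0 (Ici a) y :=
    fun y hy => ((hg y hy).fun_mul (hP y).fun_neg.exp.hasDerivWithinAt).congr_deriv (by ring)
  have hcont : ContinuousOn (fun y => g y * exp (-P y)) (Icc a x) :=
    fun y hy => ((hconst y hy.1).continuousWithinAt).mono Icc_subset_Ici_self
  have key := constant_of_has_deriv_right_zero hcont
    (fun y hy => (hconst y hy.1).mono (Ici_subset_Ici.mpr hy.1)) x ⟨hx, le_rfl⟩
  simp only [P, intervalIntegral.integral_same, neg_zero, exp_zero, mul_one] at key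
  rw [← key, exp_neg, mul_assoc, inv_mul_cancel₀ (exp_pos _).ne', mul_one]

theorem monotoneOn_Ici_of_hasDerivAt_nonneg (hg : ContinuousOn g (Ici a))
    (hg' : ∀ x, a < x → HasDerivAt g (g' x) x) (hnonneg : ∀ x, a < x → 0 ≤ g' x) :
    MonotoneOn g (Ici a) :=
  monotoneOn_of_hasDerivWithinAt_nonneg (convex_Ici a) hg
    (fun x hx => (hg' x (by rwa [interior_Ici] at hx)).hasDerivWithinAt)
    (fun x hx => hnonneg x (by rwa [interior_Ici] at hx))

theorem antitoneOn_Ici_of_hasDerivAt_nonpos (hg : ContinuousOn g (Ici a))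
    (hg' : ∀ x, a < x → HasDerivAt g (g' x) x) (hnonpos : ∀ x, a < x → g' x ≤ 0) :
    AntitoneOn g (Ici a) :=
  antitoneOn_of_hasDerivWithinAt_nonpos (convex_Ici a) hg
    (fun x hx => (hg' x (by rwa [interior_Ici] at hx)).hasDerivWithinAt)
    (fun x hx => hnonpos x (by rwa [interior_Ici] at hx))

theorem strictMonoOn_Ici_of_hasDerivAt_pos (hg : ContinuousOn g (Ici a))
    (hg' : ∀ x, a < x → HasDerivAt g (g' x) x) (hpos : ∀ x, a < x → 0 < g' x) :
    StrictMonoOn g (Ici a) :=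
  strictMonoOn_of_hasDerivWithinAt_pos (convex_Ici a) hg
    (fun x hx => (hg' x (by rwa [interior_Ici] at hx)).hasDerivWithinAt)
    (fun x hx => hpos x (by rwa [interior_Ici] at hx))

theorem mul_sub_le_sub_of_le_hasDerivAt {c x : ℝ} (hg : ContinuousOn g (Ici a))
    (hg' : ∀ y, a < y → HasDerivAt g (g' y) y) (hc : ∀ y, a < y → c ≤ g' y) (hx : a ≤ x) :
    c * (x - a) ≤ g x - g a := by
  have hmono : MonotoneOn (fun y => g y - c * y) (Ici a) :=
    monotoneOn_Ici_of_hasDerivAt_nonneg (hg.sub (continuousOn_const.mul continuousOn_id))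
      (fun y hy => ((hg' y hy).fun_sub ((hasDerivAt_id' y).const_mul c)))
      (fun y hy => by linarith [hc y hy])
  linarith [hmono self_mem_Ici hx hx]

theorem MonotoneOn.le_of_tendsto_atTop {L x : ℝ} (hg : MonotoneOn g (Ici a))
    (hlim : Tendsto g atTop (𝓝 L)) (hx : a ≤ x) : g x ≤ L :=
  ge_of_tendsto hlim <| (eventually_ge_atTop x).mono fun _ hy => hg hx (hx.trans hy) hy

theorem AntitoneOn.le_of_tendsto_atTop {L x : ℝ} (hg : AntitoneOn g (Ici a))
    (hlim : Tendsto g atTop (𝓝 L)) (hx : a ≤ x) : L ≤ g x :=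
  le_of_tendsto hlim <| (eventually_ge_atTop x).mono fun _ hy => hg hx (hx.trans hy) hy

theorem le_add_div_mul_exp_of_tendsto {L C k x : ℝ} (hk : 0 < k)
    (hg : ContinuousOn g (Ici a)) (hg' : ∀ y, a < y → HasDerivAt g (g' y) y)
    (hbound : ∀ y, a < y → g' y ≤ C * exp (-k * y)) (hlim : Tendsto g atTop (𝓝 L))
    (hx : a ≤ x) : L ≤ g x + C / k * exp (-k * x) := by
  have hE : ∀ y, HasDerivAt (fun y => C / k * exp (-k * y)) (-C * exp (-k * y)) y := fun y =>
    ((((hasDerivAt_id' y).const_mul (-k)).exp).const_mul (C / k)).congr_deriv (by field_simp)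
  have hanti : AntitoneOn (fun y => g y + C / k * exp (-k * y)) (Ici a) :=
    antitoneOn_Ici_of_hasDerivAt_nonpos (hg.add (Continuous.continuousOn (by fun_prop)))
      (fun y hy => (hg' y hy).fun_add (hE y)) (fun y hy => by linarith [hbound y hy])
  have hexp : Tendsto (fun y => exp (-k * y)) atTop (𝓝 0) :=
    tendsto_exp_atBot.comp (tendsto_id.const_mul_atTop_of_neg (neg_neg_of_pos hk))
  simpa using hanti.le_of_tendsto_atTop (by simpa using hlim.add (hexp.const_mul (C / k))) hx

end Ici

theorem mul_exp_neg_two_mul_le {δ : ℝ} (hδ : 0 < δ) (x : ℝ) :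
    x * exp (-(2 * δ) * x) ≤ δ⁻¹ * exp (-δ * x) := by
  have hlin : δ * x ≤ exp (δ * x) := by linarith [add_one_le_exp (δ * x)]
  have hsplit : exp (-(2 * δ) * x) = exp (-δ * x) * exp (-δ * x) := by
    rw [← exp_add]; ring_nf
  calc x * exp (-(2 * δ) * x) = δ⁻¹ * (δ * x) * exp (-δ * x) * exp (-δ * x) := by
        rw [hsplit]; field_simp
    _ ≤ δ⁻¹ * exp (δ * x) * exp (-δ * x) * exp (-δ * x) := by gcongr
    _ = δ⁻¹ * exp (-δ * x) := by
        rw [mul_assoc (δ⁻¹), ← exp_add]; ring_nf; simp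

section Dr

variable {g : ℝ → ℝ} {m : WithTop ℕ∞} {n : ℕ} {x : ℝ}

theorem Dr_zero : Dr g 0 = g := iteratedDerivWithin_zero

theorem ContDiffOn.hasDerivWithinAt_Dr (hg : ContDiffOn ℝ m g (Ici 0)) (hn : (n : WithTop ℕ∞) < m)
    (hx : 0 ≤ x) : HasDerivWithinAt (Dr g n) (Dr g (n + 1) x) (Ici 0) x := by
  simp only [Dr, iteratedDerivWithin_succ]
  exact (hg.differentiableOn_iteratedDerivWithin hn (uniqueDiffOn_Ici 0) x hx).hasDerivWithinAt

theorem ContDiffOn.hasDerivAt_Dr (hg : ContDiffOn ℝ m g (Ici 0)) (hn : (n : WithTop ℕ∞) < m)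
    (hx : 0 < x) : HasDerivAt (Dr g n) (Dr g (n + 1) x) x :=
  (hg.hasDerivWithinAt_Dr hn hx.le).hasDerivAt (Ici_mem_nhds hx)

theorem ContDiffOn.continuousOn_Dr (hg : ContDiffOn ℝ m g (Ici 0)) (hn : (n : WithTop ℕ∞) ≤ m) :
    ContinuousOn (Dr g n) (Ici 0) :=
  hg.continuousOn_iteratedDerivWithin hn (uniqueDiffOn_Ici 0)

end Dr

namespace IsBlasiusSolution

variable {f : ℝ → ℝ} {x : ℝ}

theorem hasDerivAt (hf : IsBlasiusSolution f) (hx : 0 < x) : HasDerivAt f (Dr f 1 x) x := by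
  simpa [Dr_zero] using hf.1.hasDerivAt_Dr (n := 0) (by norm_num) hx

theorem hasDerivAt_Dr_one (hf : IsBlasiusSolution f) (hx : 0 < x) :
    HasDerivAt (Dr f 1) (Dr f 2 x) x :=
  hf.1.hasDerivAt_Dr (by norm_num) hx

theorem Dr_three_eq (hf : IsBlasiusSolution f) (hx : 0 ≤ x) :
    Dr f 3 x = -(f x * Dr f 2 x) / 2 := by
  linarith [hf.2.1 x hx]

theorem intervalIntegrable (hf : IsBlasiusSolution f) {a b : ℝ} (ha : 0 ≤ a) (hb : 0 ≤ b) :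
    IntervalIntegrable f volume a b :=
  (hf.1.continuousOn.mono fun _ ht => (le_min ha hb).trans ht.1).intervalIntegrable

theorem Dr_two_eq (hf : IsBlasiusSolution f) (hx : 0 ≤ x) :
    Dr f 2 x = Dr f 2 0 * exp (-(∫ t in (0 : ℝ)..x, f t) / 2) := by
  have hcont : Continuous fun t => -f (max t 0) / 2 :=
    ((hf.1.continuousOn.comp_continuous (continuous_id.max continuous_const)
      fun t => le_max_right t 0).neg).div_const 2
  have hsol := eq_mul_exp_integral_of_hasDerivWithinAt hcont (fun y hy =>
    (hf.1.hasDerivWithinAt_Dr (n := 2) (by norm_num) hy).congr_deriv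
      (by rw [hf.Dr_three_eq hy, max_eq_left hy]; ring)) hx
  rw [hsol, intervalIntegral.integral_div, intervalIntegral.integral_neg,
    intervalIntegral.integral_congr fun t ht => by
      rw [max_eq_left (show 0 ≤ t from (le_min le_rfl hx).trans ht.1)]]

theorem Dr_two_zero_pos (hf : IsBlasiusSolution f) : 0 < Dr f 2 0 := by
  by_contra! h
  have hanti : AntitoneOn (Dr f 1) (Ici 0) :=
    antitoneOn_Ici_of_hasDerivAt_nonpos (hf.1.continuousOn_Dr (by norm_num))
      (fun _ hy => hf.hasDerivAt_Dr_one hy) fun y hy => by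
        rw [hf.Dr_two_eq hy.le]
        exact mul_nonpos_of_nonpos_of_nonneg h (exp_pos _).le
  have := hanti.le_of_tendsto_atTop hf.2.2.2.2 le_rfl
  linarith [hf.2.2.2.1]

theorem Dr_two_pos (hf : IsBlasiusSolution f) (hx : 0 ≤ x) : 0 < Dr f 2 x := by
  rw [hf.Dr_two_eq hx]
  exact mul_pos hf.Dr_two_zero_pos (exp_pos _)

theorem strictMonoOn_Dr_one (hf : IsBlasiusSolution f) : StrictMonoOn (Dr f 1) (Ici 0) :=
  strictMonoOn_Ici_of_hasDerivAt_pos (hf.1.continuousOn_Dr (by norm_num))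
    (fun _ hy => hf.hasDerivAt_Dr_one hy) fun _ hy => hf.Dr_two_pos hy.le

theorem Dr_one_pos (hf : IsBlasiusSolution f) (hx : 0 < x) : 0 < Dr f 1 x := by
  simpa [hf.2.2.2.1] using hf.strictMonoOn_Dr_one self_mem_Ici hx.le hx

theorem Dr_one_le_one (hf : IsBlasiusSolution f) (hx : 0 ≤ x) : Dr f 1 x ≤ 1 :=
  hf.strictMonoOn_Dr_one.monotoneOn.le_of_tendsto_atTop hf.2.2.2.2 hx

theorem strictMonoOn (hf : IsBlasiusSolution f) : StrictMonoOn f (Ici 0) :=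
  strictMonoOn_Ici_of_hasDerivAt_pos hf.1.continuousOn (fun _ hy => hf.hasDerivAt hy)
    fun _ hy => hf.Dr_one_pos hy

theorem pos (hf : IsBlasiusSolution f) (hx : 0 < x) : 0 < f x := by
  simpa [hf.2.2.1] using hf.strictMonoOn self_mem_Ici hx.le hx

theorem nonneg (hf : IsBlasiusSolution f) (hx : 0 ≤ x) : 0 ≤ f x := by
  simpa [hf.2.2.1] using hf.strictMonoOn.monotoneOn self_mem_Ici hx hx

theorem le_self (hf : IsBlasiusSolution f) (hx : 0 ≤ x) : f x ≤ x := by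
  have := mul_sub_le_sub_of_le_hasDerivAt (g := fun y => y - f y) (c := 0)
    (continuousOn_id.sub hf.1.continuousOn)
    (fun y hy => (hasDerivAt_id' y).fun_sub (hf.hasDerivAt hy))
    (fun y hy => sub_nonneg.2 (hf.Dr_one_le_one hy.le)) hx
  simp only [hf.2.2.1, zero_mul, sub_zero] at this
  linarith

theorem Dr_three_neg (hf : IsBlasiusSolution f) (hx : 0 < x) : Dr f 3 x < 0 := by
  rw [hf.Dr_three_eq hx.le]
  linarith [mul_pos (hf.pos hx) (hf.Dr_two_pos hx.le)]

theorem exists_sub_le_integral (hf : IsBlasiusSolution f) :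
    ∃ x₁, ∀ x, 0 ≤ x → (x - x₁) / 2 ≤ ∫ t in (0 : ℝ)..x, f t := by
  obtain ⟨x₀, hx₀⟩ := eventually_atTop.1 <|
    (hf.2.2.2.2.eventually (eventually_ge_nhds (by norm_num : (1 : ℝ) / 2 < 1))).and
      (eventually_ge_atTop 0)
  have hx₀0 : 0 ≤ x₀ := (hx₀ x₀ le_rfl).2
  have hlin : ∀ x, x₀ ≤ x → (x - x₀) / 2 ≤ f x := fun x hx => by
    have := mul_sub_le_sub_of_le_hasDerivAt (hf.1.continuousOn.mono (Ici_subset_Ici.2 hx₀0))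
      (fun y hy => hf.hasDerivAt (hx₀0.trans_lt hy)) (fun y hy => (hx₀ y hy.le).1) hx
    linarith [hf.nonneg hx₀0]
  refine ⟨x₀ + 1, fun x hx => ?_⟩
  have hint_nonneg : ∀ a b, 0 ≤ a → a ≤ b → 0 ≤ ∫ t in a..b, f t := fun a b ha hab =>
    intervalIntegral.integral_nonneg hab fun t ht => hf.nonneg (ha.trans ht.1)
  rcases le_or_gt x (x₀ + 1) with hle | hlt
  · linarith [hint_nonneg 0 x le_rfl hx]
  have hx₁ : 0 ≤ x₀ + 1 := by linarith
  have htail : ∫ t in (x₀ + 1)..x, (1 / 2 : ℝ) ≤ ∫ t in (x₀ + 1)..x, f t :=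
    intervalIntegral.integral_mono_on hlt.le intervalIntegrable_const
      (hf.intervalIntegrable hx₁ hx) fun t ht => by linarith [ht.1, hlin t (by linarith [ht.1])]
  rw [← intervalIntegral.integral_add_adjacent_intervals (hf.intervalIntegrable le_rfl hx₁)
    (hf.intervalIntegrable hx₁ hx)]
  simp only [intervalIntegral.integral_const, smul_eq_mul] at htail
  linarith [hint_nonneg 0 (x₀ + 1) le_rfl hx₁]

theorem exists_Dr_two_le (hf : IsBlasiusSolution f) :
    ∃ C, 0 < C ∧ ∀ x, 0 ≤ x → Dr f 2 x ≤ C * exp (-(1 / 4) * x) := by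
  obtain ⟨x₁, hx₁⟩ := hf.exists_sub_le_integral
  refine ⟨Dr f 2 0 * exp (x₁ / 4), mul_pos hf.Dr_two_zero_pos (exp_pos _), fun x hx => ?_⟩
  rw [hf.Dr_two_eq hx, mul_assoc, ← exp_add]
  gcongr ?_ * exp ?_
  · exact hf.Dr_two_zero_pos.le
  · linarith [hx₁ x hx]

theorem abs_Dr_one_sub_one_le (hf : IsBlasiusSolution f) {C : ℝ}
    (hC : ∀ x, 0 ≤ x → Dr f 2 x ≤ C * exp (-(1 / 4) * x)) (hx : 0 ≤ x) :
    |Dr f 1 x - 1| ≤ 4 * C * exp (-(1 / 4) * x) := by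
  have := le_add_div_mul_exp_of_tendsto (by norm_num) (hf.1.continuousOn_Dr (by norm_num))
    (fun _ hy => hf.hasDerivAt_Dr_one hy) (fun y hy => hC y hy.le) hf.2.2.2.2 hx
  rw [abs_sub_comm, abs_of_nonneg (sub_nonneg.2 (hf.Dr_one_le_one hx))]
  linarith

theorem abs_Dr_three_le (hf : IsBlasiusSolution f) {C : ℝ}
    (hC : ∀ x, 0 ≤ x → Dr f 2 x ≤ C * exp (-(1 / 4) * x)) (hx : 0 ≤ x) :
    |Dr f 3 x| ≤ 4 * C * exp (-(1 / 8) * x) := by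
  have hC0 : 0 ≤ C := by simpa using (hf.Dr_two_pos le_rfl).le.trans (hC 0 le_rfl)
  have hf2 := (hf.Dr_two_pos hx).le
  rw [hf.Dr_three_eq hx, abs_of_nonpos (by linarith [mul_nonneg (hf.nonneg hx) hf2])]
  calc -(-(f x * Dr f 2 x) / 2) = f x * Dr f 2 x / 2 := by ring
    _ ≤ x * (C * exp (-(1 / 4) * x)) / 2 := by
        gcongr
        exacts [hf.le_self hx, hC x hx]
    _ = C / 2 * (x * exp (-(2 * (1 / 8)) * x)) := by ring_nf
    _ ≤ C / 2 * ((1 / 8)⁻¹ * exp (-(1 / 8) * x)) :=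
        mul_le_mul_of_nonneg_left (mul_exp_neg_two_mul_le (by norm_num) x) (by positivity)
    _ = 4 * C * exp (-(1 / 8) * x) := by ring

end IsBlasiusSolution

/-- Properties of the Blasius profile `V := f'`: `V > 0`, `V' > 0`, `V'' < 0` on
`(0, ∞)`, and `V → 1`, `V' → 0`, `V'' → 0` exponentially as `x → ∞`. -/
theorem blasius_profile_properties
    (f : ℝ → ℝ) (hf : IsBlasiusSolution f) :
    (∀ x : ℝ, 0 < x → 0 < Dr f 1 x ∧ 0 < Dr f 2 x ∧ Dr f 3 x < 0) ∧
    (∃ C δ : ℝ, 0 < C ∧ 0 < δ ∧ ∀ x : ℝ, 0 ≤ x →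
      |Dr f 1 x - 1| ≤ C * Real.exp (-δ * x) ∧
      |Dr f 2 x| ≤ C * Real.exp (-δ * x) ∧
      |Dr f 3 x| ≤ C * Real.exp (-δ * x)) := by
  obtain ⟨C, hC, hDr2⟩ := hf.exists_Dr_two_le
  refine ⟨fun x hx => ⟨hf.Dr_one_pos hx, hf.Dr_two_pos hx.le, hf.Dr_three_neg hx⟩,
    4 * C, 1 / 8, by positivity, by norm_num, fun x hx => ⟨?_, ?_, hf.abs_Dr_three_le hDr2 hx⟩⟩
  · exact (hf.abs_Dr_one_sub_one_le hDr2 hx).trans (by gcongr; linarith)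
  · rw [abs_of_pos (hf.Dr_two_pos hx)]
    exact (hDr2 x hx).trans (by gcongr <;> linarith)
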